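/- In the setting of an F-limit set F built from an assignment σ ↦ f_σ of m-tuples of compressions on a collection 𝒳 of nonempty compact subsets of a metric space: if u := sup_{σ∈D} Σ_{j=1}^m U(f_σ^{(j)}) satisfies u < 1, then dim_H(F) ≤ log(m)/(log(m) − log(u)). -/

import Mathlib

/-- `Uof 𝒳 g = sup_{E ∈ 𝒳} diam(g E) / diam E`. -/
noncomputable def Uof {X : Type*} [MetricSpace X] (𝒳 : Set (Set X)) (g : Set X → Set X) : ℝ :=
  sSup ((fun E => Metric.diam (g E) / Metric.diam E) '' 𝒳)

/-- `Lof 𝒳 g = inf_{E ∈ 𝒳} diam(g E) / diam E`. -/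
noncomputable def Lof {X : Type*} [MetricSpace X] (𝒳 : Set (Set X)) (g : Set X → Set X) : ℝ :=
  sInf ((fun E => Metric.diam (g E) / Metric.diam E) '' 𝒳)

/-! Put `s = log m / (log m - log u)`, so that `m ^ (1 - s) * u ^ s = 1`. By concavity of
`x ↦ x ^ s`, every word `σ` satisfies `∑ⱼ U(f_σ⁽ʲ⁾) ^ s ≤ m ^ (1 - s) * u ^ s = 1`, hence the sum of
`diam (J σ) ^ s` over the words of length `k` never exceeds `diam E₀ ^ s`. These sets cover `F` and
have diameter at most `u ^ k * diam E₀ → 0`, so the `s`-dimensional Hausdorff measure of `F` is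
finite. -/

open Metric Set Filter Topology MeasureTheory Finset Bornology

lemma Real.sum_rpow_le_card_rpow_mul_rpow_sum {ι : Type*} (s : Finset ι) {a : ι → ℝ}
    (ha : ∀ i ∈ s, 0 ≤ a i) {p : ℝ} (hp₀ : 0 ≤ p) (hp₁ : p ≤ 1) :
    ∑ i ∈ s, a i ^ p ≤ (#s : ℝ) ^ (1 - p) * (∑ i ∈ s, a i) ^ p := by
  rcases s.eq_empty_or_nonempty with rfl | hs
  · simp only [sum_empty]
    positivity
  have hn : (0 : ℝ) < #s := by exact_mod_cast hs.card_pos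
  have jensen := (Real.concaveOn_rpow hp₀ hp₁).le_map_sum (t := s) (p := a)
    (w := fun _ => (#s : ℝ)⁻¹) (fun _ _ => by positivity) (by simp [hn.ne']) ha
  simp only [smul_eq_mul, ← mul_sum] at jensen
  rw [Real.mul_rpow (by positivity) (sum_nonneg ha), Real.inv_rpow hn.le] at jensen
  calc ∑ i ∈ s, a i ^ p = #s * ((#s : ℝ)⁻¹ * ∑ i ∈ s, a i ^ p) := by field_simp
    _ ≤ #s * (((#s : ℝ) ^ p)⁻¹ * (∑ i ∈ s, a i) ^ p) := by gcongr
    _ = (#s : ℝ) ^ (1 - p) * (∑ i ∈ s, a i) ^ p := by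
      rw [Real.rpow_sub hn, Real.rpow_one]; ring

lemma sum_rpow_le_one_of_sum_le {ι : Type*} [Fintype ι] [Nonempty ι] {a : ι → ℝ}
    (ha : ∀ i, 0 ≤ a i) {u : ℝ} (hu₀ : 0 < u) (hu₁ : u < 1) (hsum : ∑ i, a i ≤ u) :
    ∑ i, a i ^ (Real.log (Fintype.card ι) / (Real.log (Fintype.card ι) - Real.log u)) ≤ 1 := by
  set n : ℝ := (Fintype.card ι : ℝ)
  set s := Real.log n / (Real.log n - Real.log u)
  have hn : 1 ≤ n := Nat.one_le_cast.2 Fintype.card_pos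
  have hlog_n : 0 ≤ Real.log n := Real.log_nonneg hn
  have hden : 0 < Real.log n - Real.log u := by linarith [Real.log_neg hu₀ hu₁]
  have hs₀ : 0 ≤ s := div_nonneg hlog_n hden.le
  have hs₁ : s ≤ 1 := (div_le_one hden).2 (by linarith [Real.log_neg hu₀ hu₁])
  -- `s` is chosen so that `n ^ (1 - s) * u ^ s = 1`.
  have hexp : Real.log n * (1 - s) + Real.log u * s = 0 := by
    have : s * (Real.log n - Real.log u) = Real.log n := div_mul_cancel₀ _ hden.ne'
    linear_combination -this
  calc ∑ i, a i ^ s ≤ n ^ (1 - s) * (∑ i, a i) ^ s :=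
        Real.sum_rpow_le_card_rpow_mul_rpow_sum univ (fun i _ => ha i) hs₀ hs₁
    _ ≤ n ^ (1 - s) * u ^ s := by gcongr; exact sum_nonneg fun i _ => ha i
    _ = 1 := by
      rw [Real.rpow_def_of_pos (by linarith), Real.rpow_def_of_pos hu₀, ← Real.exp_add, hexp,
        Real.exp_zero]

lemma sum_rpow_le_rpow_of_le_mul {ι : Type*} [Fintype ι] {a d : ι → ℝ} {D s : ℝ}
    (ha : ∀ i, 0 ≤ a i) (hd : ∀ i, 0 ≤ d i) (hD : 0 ≤ D) (hs : 0 ≤ s)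
    (hsum : ∑ i, a i ^ s ≤ 1) (hle : ∀ i, d i ≤ a i * D) : ∑ i, d i ^ s ≤ D ^ s :=
  calc ∑ i, d i ^ s ≤ ∑ i, a i ^ s * D ^ s := sum_le_sum fun i _ => by
        rw [← Real.mul_rpow (ha i) hD]
        exact Real.rpow_le_rpow (hd i) (hle i) hs
    _ ≤ D ^ s := by
        rw [← sum_mul]
        exact mul_le_of_le_one_left (by positivity) hsum

section Compression

variable {X : Type*} [MetricSpace X] {𝒳 : Set (Set X)} {g : Set X → Set X}

lemma one_mem_upperBounds_diam_div_diam (h𝒳 : ∀ E ∈ 𝒳, IsBounded E) (hg : ∀ E ∈ 𝒳, g E ⊆ E) :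
    1 ∈ upperBounds ((fun E => diam (g E) / diam E) '' 𝒳) := by
  rintro _ ⟨E, hE, rfl⟩
  exact div_le_one_of_le₀ (diam_mono (hg E hE) (h𝒳 E hE)) diam_nonneg

lemma Uof_le_one (h𝒳 : ∀ E ∈ 𝒳, IsBounded E) (hg : ∀ E ∈ 𝒳, g E ⊆ E) : Uof 𝒳 g ≤ 1 :=
  Real.sSup_le (one_mem_upperBounds_diam_div_diam h𝒳 hg) zero_le_one

lemma diam_div_diam_le_Uof (h𝒳 : ∀ E ∈ 𝒳, IsBounded E) (hg : ∀ E ∈ 𝒳, g E ⊆ E) {E : Set X}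
    (hE : E ∈ 𝒳) : diam (g E) / diam E ≤ Uof 𝒳 g :=
  le_csSup ⟨1, one_mem_upperBounds_diam_div_diam h𝒳 hg⟩ ⟨E, hE, rfl⟩

lemma diam_le_Uof_mul (h𝒳 : ∀ E ∈ 𝒳, IsBounded E) (hg : ∀ E ∈ 𝒳, g E ⊆ E) {E : Set X}
    (hE : E ∈ 𝒳) : diam (g E) ≤ Uof 𝒳 g * diam E := by
  rcases (diam_nonneg (s := E)).eq_or_lt with h0 | hpos
  · rw [← h0, mul_zero]
    exact (diam_mono (hg E hE) (h𝒳 E hE)).trans h0.ge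
  · exact (div_le_iff₀ hpos).1 (diam_div_diam_le_Uof h𝒳 hg hE)

lemma Uof_pos (h𝒳 : ∀ E ∈ 𝒳, IsBounded E) (hg : ∀ E ∈ 𝒳, g E ⊆ E) {E : Set X} (hE : E ∈ 𝒳)
    (hE_pos : 0 < diam E) (hgE_pos : 0 < diam (g E)) : 0 < Uof 𝒳 g :=
  (div_pos hgE_pos hE_pos).trans_le (diam_div_diam_le_Uof h𝒳 hg hE)

end Compression

section Words

variable {α X : Type*}

lemma le_pow_length_mul_of_append_singleton_le {w : List α → ℝ} {c : ℝ} (hc : 0 ≤ c)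
    (hw : ∀ σ j, w (σ ++ [j]) ≤ c * w σ) (σ : List α) : w σ ≤ c ^ σ.length * w [] := by
  induction σ using List.reverseRecOn with
  | nil => simp
  | append_singleton σ j ih =>
    calc w (σ ++ [j]) ≤ c * (c ^ σ.length * w []) := (hw σ j).trans (by gcongr)
      _ = c ^ (σ ++ [j]).length * w [] := by
        rw [List.length_append, List.length_singleton, pow_succ]; ring

lemma List.ofFn_snoc {n : ℕ} (g : Fin n → α) (j : α) :
    List.ofFn (Fin.snoc g j : Fin (n + 1) → α) = List.ofFn g ++ [j] := by
  rw [List.ofFn_succ']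
  simp [List.concat_eq_append]

lemma sum_ofFn_le_of_sum_append_singleton_le [Fintype α] {w : List α → ℝ}
    (hw : ∀ σ, ∑ j, w (σ ++ [j]) ≤ w σ) (k : ℕ) : ∑ g : Fin k → α, w (List.ofFn g) ≤ w [] := by
  induction k with
  | zero => simp
  | succ k ih =>
    calc ∑ g : Fin (k + 1) → α, w (List.ofFn g)
        = ∑ g : Fin k → α, ∑ j, w (List.ofFn g ++ [j]) := by
          rw [← (Fin.snocEquiv fun _ => α).sum_comp, Fintype.sum_prod_type_right]
          simp only [Fin.snocEquiv, Equiv.coe_fn_mk, List.ofFn_snoc]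
      _ ≤ ∑ g : Fin k → α, w (List.ofFn g) := sum_le_sum fun g _ => hw _
      _ ≤ w [] := ih

lemma iUnion_length_eq_eq_iUnion_ofFn (J : List α → Set X) (k : ℕ) :
    ⋃ (σ : List α) (_ : σ.length = k), J σ = ⋃ g : Fin k → α, J (List.ofFn g) := by
  ext x
  simp only [mem_iUnion]
  constructor
  · rintro ⟨σ, rfl, hx⟩
    exact ⟨σ.get, by rwa [List.ofFn_get]⟩
  · rintro ⟨g, hx⟩
    exact ⟨_, List.length_ofFn, hx⟩

end Words

lemma Bornology.IsBounded.ediam_eq_ofReal_diam {X : Type*} [PseudoMetricSpace X] {E : Set X}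
    (hE : IsBounded E) : ediam E = ENNReal.ofReal (diam E) :=
  (ENNReal.ofReal_toReal hE.ediam_ne_top).symm

lemma dimH_le_of_covers {X : Type*} [MetricSpace X] {ι : ℕ → Type*} [∀ k, Fintype (ι k)]
    {F : Set X} {s C : ℝ} (hs : 0 ≤ s) (t : ∀ k, ι k → Set X) (r : ℕ → ℝ)
    (hr : Tendsto r atTop (𝓝 0)) (ht_bdd : ∀ k i, IsBounded (t k i))
    (ht_diam : ∀ k i, diam (t k i) ≤ r k) (hF : ∀ᶠ k in atTop, F ⊆ ⋃ i, t k i)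
    (hC : ∀ k, ∑ i, diam (t k i) ^ s ≤ C) : dimH F ≤ ENNReal.ofReal s := by
  borelize X
  have hμ : μH[s] F ≤ ENNReal.ofReal C := by
    refine (Measure.hausdorffMeasure_le_liminf_sum s F (fun k => ENNReal.ofReal (r k)) ?_ t ?_
      hF).trans ?_
    · exact ENNReal.ofReal_zero ▸ ENNReal.tendsto_ofReal hr
    · refine Eventually.of_forall fun k i => ?_
      rw [(ht_bdd k i).ediam_eq_ofReal_diam]
      exact ENNReal.ofReal_le_ofReal (ht_diam k i)
    · refine liminf_le_of_frequently_le' (Frequently.of_forall fun k => ?_)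
      calc ∑ i, ediam (t k i) ^ s = ∑ i, ENNReal.ofReal (diam (t k i) ^ s) := by
            refine sum_congr rfl fun i _ => ?_
            rw [(ht_bdd k i).ediam_eq_ofReal_diam, ENNReal.ofReal_rpow_of_nonneg diam_nonneg hs]
        _ = ENNReal.ofReal (∑ i, diam (t k i) ^ s) :=
            (ENNReal.ofReal_sum_of_nonneg fun i _ => by positivity).symm
        _ ≤ ENNReal.ofReal C := ENNReal.ofReal_le_ofReal (hC k)
  have hμ_ne_top : μH[s.toNNReal] F ≠ ⊤ := by
    rw [Real.coe_toNNReal _ hs]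
    exact ne_top_of_le_ne_top ENNReal.ofReal_ne_top hμ
  exact dimH_le_of_hausdorffMeasure_ne_top hμ_ne_top

lemma dimH_iInter_iUnion_le {X α : Type*} [MetricSpace X] [Fintype α] {J : List α → Set X}
    {c : List α → α → ℝ} {u s : ℝ} (hJ_bdd : ∀ σ, IsBounded (J σ)) (hc : ∀ σ j, 0 ≤ c σ j)
    (hcu : ∀ σ j, c σ j ≤ u) (hu₀ : 0 ≤ u) (hu₁ : u < 1) (hs : 0 ≤ s)
    (hcs : ∀ σ, ∑ j, c σ j ^ s ≤ 1) (hdiam : ∀ σ j, diam (J (σ ++ [j])) ≤ c σ j * diam (J σ)) :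
    dimH (⋂ (k : ℕ) (_ : 1 ≤ k), ⋃ (σ : List α) (_ : σ.length = k), J σ) ≤ ENNReal.ofReal s := by
  refine dimH_le_of_covers hs (fun k (g : Fin k → α) => J (List.ofFn g))
    (fun k => u ^ k * diam (J [])) ?_ (fun k g => hJ_bdd _) (fun k g => ?_) ?_
    (C := diam (J []) ^ s) fun k => ?_
  · simpa using (tendsto_pow_atTop_nhds_zero_of_lt_one hu₀ hu₁).mul_const (diam (J []))
  · have hstep (σ j) : diam (J (σ ++ [j])) ≤ u * diam (J σ) :=
      (hdiam σ j).trans (mul_le_mul_of_nonneg_right (hcu σ j) diam_nonneg)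
    simpa using le_pow_length_mul_of_append_singleton_le (w := fun σ => diam (J σ)) hu₀ hstep
      (List.ofFn g)
  · filter_upwards [eventually_ge_atTop 1] with k hk
    rw [← iUnion_length_eq_eq_iUnion_ofFn]
    exact biInter_subset_of_mem hk
  · exact sum_ofFn_le_of_sum_append_singleton_le (w := fun σ => diam (J σ) ^ s)
      (fun σ => sum_rpow_le_rpow_of_le_mul (hc σ) (fun _ => diam_nonneg) diam_nonneg hs (hcs σ)
        (hdiam σ)) k

/-- Corollary 4.7(b): if `u = sup_σ ∑_j U(f_σ^{(j)}) < 1` then `dim_H F ≤ log m / (log m − log u)`. -/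
theorem stmt_14 {X : Type*} [MetricSpace X] (m : ℕ) (hm : 2 ≤ m)
    (𝒳 : Set (Set (X)))
    (h𝒳 : ∀ E ∈ 𝒳, E.Nonempty ∧ IsCompact E ∧ 0 < Metric.diam E)
    (f : List (Fin m) → Fin m → Set (X) → Set (X))
    (hf : ∀ (σ : List (Fin m)) (j : Fin m), ∀ E ∈ 𝒳, f σ j E ∈ 𝒳 ∧ f σ j E ⊆ E)
    (E₀ : Set (X)) (hE₀ : E₀ ∈ 𝒳)
    (J : List (Fin m) → Set (X))
    (hJnil : J [] = E₀)
    (hJ : ∀ (σ : List (Fin m)) (j : Fin m), J (σ ++ [j]) = f σ j (J σ))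
    (F : Set (X))
    (hF : F = ⋂ (k : ℕ) (_ : 1 ≤ k), ⋃ (σ : List (Fin m)) (_ : σ.length = k), J σ)
    (hu : (⨆ σ : List (Fin m), ∑ j : Fin m, Uof 𝒳 (f σ j)) < 1) :
    dimH F ≤ ENNReal.ofReal (Real.log m /
      (Real.log m - Real.log (⨆ σ : List (Fin m), ∑ j : Fin m, Uof 𝒳 (f σ j)))) := by
  have : Nonempty (Fin m) := ⟨⟨0, by omega⟩⟩
  set u := ⨆ σ : List (Fin m), ∑ j : Fin m, Uof 𝒳 (f σ j)
  have h𝒳_bdd : ∀ E ∈ 𝒳, IsBounded E := fun E hE => (h𝒳 E hE).2.1.isBounded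
  have hsub : ∀ σ j, ∀ E ∈ 𝒳, f σ j E ⊆ E := fun σ j E hE => (hf σ j E hE).2
  have hJ_mem (σ : List (Fin m)) : J σ ∈ 𝒳 := by
    induction σ using List.reverseRecOn with
    | nil => rwa [hJnil]
    | append_singleton σ j ih => rw [hJ]; exact (hf σ j _ ih).1
  have hU_pos (σ j) : 0 < Uof 𝒳 (f σ j) :=
    Uof_pos h𝒳_bdd (hsub σ j) hE₀ (h𝒳 _ hE₀).2.2 (h𝒳 _ (hf σ j _ hE₀).1).2.2
  have hsum_le (σ) : ∑ j, Uof 𝒳 (f σ j) ≤ u := by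
    refine le_ciSup (f := fun σ => ∑ j, Uof 𝒳 (f σ j)) ⟨m, ?_⟩ σ
    rintro _ ⟨τ, rfl⟩
    simpa using sum_le_sum (s := univ) fun j _ => Uof_le_one h𝒳_bdd (hsub τ j)
  have hu_pos : 0 < u := (sum_pos (fun j _ => hU_pos [] j) univ_nonempty).trans_le (hsum_le [])
  have hlog_m : 0 ≤ Real.log m := Real.log_nonneg (by exact_mod_cast hm.trans' one_le_two)
  rw [hF]
  refine dimH_iInter_iUnion_le (c := fun σ j => Uof 𝒳 (f σ j)) (fun σ => h𝒳_bdd _ (hJ_mem σ))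
    (fun σ j => (hU_pos σ j).le) (fun σ j => ?_) hu_pos.le hu
    (div_nonneg hlog_m (by linarith [Real.log_neg hu_pos hu])) (fun σ => ?_)
    (fun σ j => hJ σ j ▸ diam_le_Uof_mul h𝒳_bdd (hsub σ j) (hJ_mem σ))
  · exact (single_le_sum (fun i _ => (hU_pos σ i).le) (mem_univ j)).trans (hsum_le σ)
  · simpa using sum_rpow_le_one_of_sum_le (fun j => (hU_pos σ j).le) hu_pos hu (hsum_le σ)
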